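/- Let n ≥ 3 and let F(λ) = σ_n(λ)/σ_{n-2}(λ) on the open positive cone in ℝ^n. There exist constants c(n), C(n) > 0 depending only on n such that for every λ ∈ ℝ^n with λ_1 ≥ λ_2 ≥ ⋯ ≥ λ_n > 0, c(n)·F(λ)/λ_n ≤ ∑_{i=1}^{n} ∂F/∂λ_i(λ) ≤ C(n)·F(λ)/λ_n. -/

import Mathlib

/-- The k-th elementary symmetric polynomial of `lam : Fin n → ℝ`. -/
noncomputable def esig (n k : ℕ) (lam : Fin n → ℝ) : ℝ :=
  ∑ s ∈ Finset.powersetCard k (Finset.univ : Finset (Fin n)), ∏ j ∈ s, lam j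

/-- The quotient operator `F = σ_n / σ_{n-2}`. -/
noncomputable def Fquot (n : ℕ) (lam : Fin n → ℝ) : ℝ :=
  esig n n lam / esig n (n - 2) lam

/-- The partial derivative of `F = σ_n/σ_{n-2}` in the `i`-th coordinate at `lam`. -/
noncomputable def partialF (n : ℕ) (i : Fin n) (lam : Fin n → ℝ) : ℝ :=
  deriv (fun t : ℝ => Fquot n (Function.update lam i t)) (lam i)

open Finset

lemma esig_update (n k : ℕ) (hk : 1 ≤ k) (lam : Fin n → ℝ) (i : Fin n) (t : ℝ) :
    esig n k (Function.update lam i t)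
      = t * (∑ s ∈ ((Finset.univ : Finset (Fin n)).erase i).powersetCard (k-1), ∏ j ∈ s, lam j)
        + ∑ s ∈ ((Finset.univ : Finset (Fin n)).erase i).powersetCard k, ∏ j ∈ s, lam j := by
  obtain ⟨k, rfl⟩ : ∃ k', k = k' + 1 := ⟨k - 1, by omega⟩
  unfold esig
  have huniv : (Finset.univ : Finset (Fin n)) = insert i (Finset.univ.erase i) :=
    (Finset.insert_erase (mem_univ i)).symm
  rw [huniv, Finset.powersetCard_succ_insert (Finset.notMem_erase i _)]
  have hdisj : Disjoint (powersetCard (k+1) (Finset.univ.erase i))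
      ((powersetCard k (Finset.univ.erase i)).image (insert i)) := by
    rw [Finset.disjoint_left]
    intro s hs hs'
    simp only [Finset.mem_image] at hs'
    obtain ⟨u, hu, rfl⟩ := hs'
    have := (Finset.mem_powersetCard.1 hs).1 (Finset.mem_insert_self i u)
    exact Finset.notMem_erase i _ this
  rw [Finset.sum_union hdisj]
  have hinj : Set.InjOn (insert i) ((powersetCard k (Finset.univ.erase i) : Finset (Finset (Fin n))) : Set (Finset (Fin n))) := by
    intro a ha b hb hab
    have hia : i ∉ a := fun h => Finset.notMem_erase i _
      ((Finset.mem_powersetCard.1 ha).1 h)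
    have hib : i ∉ b := fun h => Finset.notMem_erase i _
      ((Finset.mem_powersetCard.1 hb).1 h)
    rw [← Finset.erase_insert hia, ← Finset.erase_insert hib, hab]
  rw [Finset.sum_image hinj]
  have h1 : ∀ s ∈ powersetCard (k+1) (Finset.univ.erase i),
      (∏ j ∈ s, Function.update lam i t j) = ∏ j ∈ s, lam j := by
    intro s hs
    refine Finset.prod_congr rfl fun j hj => ?_
    have : j ≠ i := Finset.ne_of_mem_erase ((Finset.mem_powersetCard.1 hs).1 hj)
    exact Function.update_of_ne this _ _
  have h2 : ∀ s ∈ powersetCard k (Finset.univ.erase i),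
      (∏ j ∈ insert i s, Function.update lam i t j) = t * ∏ j ∈ s, lam j := by
    intro s hs
    have his : i ∉ s := fun h => Finset.notMem_erase i _
      ((Finset.mem_powersetCard.1 hs).1 h)
    rw [Finset.prod_insert his, Function.update_self]
    congr 1
    refine Finset.prod_congr rfl fun j hj => ?_
    exact Function.update_of_ne (by rintro rfl; exact his hj) _ _
  rw [Finset.sum_congr rfl h1, Finset.sum_congr rfl h2]
  rw [← Finset.mul_sum]
  simp [add_comm]

lemma esig_pos (n k : ℕ) (hk : k ≤ n) (lam : Fin n → ℝ) (h : ∀ i, 0 < lam i) :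
    0 < esig n k lam := by
  unfold esig
  apply Finset.sum_pos
  · intro s _
    exact Finset.prod_pos fun j _ => h j
  · exact Finset.powersetCard_nonempty.2 (by simpa using hk)

lemma esig_top (n : ℕ) (lam : Fin n → ℝ) : esig n n lam = ∏ j, lam j := by
  unfold esig
  have : powersetCard n (Finset.univ : Finset (Fin n)) = {Finset.univ} := by
    have := Finset.powersetCard_self (Finset.univ : Finset (Fin n))
    simpa using this
  rw [this]
  simp

lemma sum_pos_of_mem {α : Type*} {s : Finset α} {f : α → ℝ}
    (h : ∀ a ∈ s, 0 < f a) {a : α} (ha : a ∈ s) : 0 < ∑ x ∈ s, f x :=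
  Finset.sum_pos h ⟨a, ha⟩

lemma swap_sum {n : ℕ} (A : Finset (Fin n)) (k : ℕ) (lam : Fin n → ℝ) :
    ∑ s ∈ A.powersetCard k, ∑ j ∈ A \ s, ∏ x ∈ insert j s, lam x
      = ∑ t ∈ A.powersetCard (k+1), ∑ j ∈ t, ∏ x ∈ t, lam x := by
  rw [Finset.sum_sigma' (A.powersetCard k) (fun s => A \ s)
    (fun s j => ∏ x ∈ insert j s, lam x),
    Finset.sum_sigma' (A.powersetCard (k+1)) (fun t => t) (fun t _ => ∏ x ∈ t, lam x)]
  refine Finset.sum_nbij' (fun p => ⟨insert p.2 p.1, p.2⟩) (fun p => ⟨p.1.erase p.2, p.2⟩)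
    ?_ ?_ ?_ ?_ ?_
  · rintro ⟨s, j⟩ hp
    simp only [Finset.mem_sigma, Finset.mem_powersetCard, Finset.mem_sdiff] at hp ⊢
    obtain ⟨⟨hsub, hcard⟩, hjA, hjs⟩ := hp
    refine ⟨⟨Finset.insert_subset hjA hsub, ?_⟩, Finset.mem_insert_self _ _⟩
    rw [Finset.card_insert_of_notMem hjs, hcard]
  · rintro ⟨t, j⟩ hp
    simp only [Finset.mem_sigma, Finset.mem_powersetCard, Finset.mem_sdiff] at hp ⊢
    obtain ⟨⟨hsub, hcard⟩, hjt⟩ := hp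
    refine ⟨⟨(Finset.erase_subset _ _).trans hsub, ?_⟩, hsub hjt, Finset.notMem_erase _ _⟩
    rw [Finset.card_erase_of_mem hjt, hcard]; rfl
  · rintro ⟨s, j⟩ hp
    simp only [Finset.mem_sigma, Finset.mem_sdiff] at hp
    simp [Finset.erase_insert hp.2.2]
  · rintro ⟨t, j⟩ hp
    simp only [Finset.mem_sigma] at hp
    simp [Finset.insert_erase hp.2]
  · rintro ⟨s, j⟩ _
    rfl

lemma card_erase_univ {n : ℕ} (i : Fin n) :
    ((Finset.univ : Finset (Fin n)).erase i).card = n - 1 := by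
  rw [Finset.card_erase_of_mem (Finset.mem_univ i)]
  simp

lemma partialF_eq (n : ℕ) (hn : 3 ≤ n) (lam : Fin n → ℝ) (hpos : ∀ i, 0 < lam i) (i : Fin n) :
    partialF n i lam = (∏ j ∈ Finset.univ.erase i, lam j) *
      (∑ s ∈ ((Finset.univ : Finset (Fin n)).erase i).powersetCard (n-2), ∏ j ∈ s, lam j)
      / (esig n (n-2) lam)^2 := by
  set P : ℝ := ∏ j ∈ Finset.univ.erase i, lam j with hP
  set Cc : ℝ := ∑ s ∈ ((Finset.univ : Finset (Fin n)).erase i).powersetCard (n-3),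
    ∏ j ∈ s, lam j with hCc
  set Dd : ℝ := ∑ s ∈ ((Finset.univ : Finset (Fin n)).erase i).powersetCard (n-2),
    ∏ j ∈ s, lam j with hDd
  have hgn1 : (∑ s ∈ ((Finset.univ : Finset (Fin n)).erase i).powersetCard (n-1),
      ∏ j ∈ s, lam j) = P := by
    have h1 : ((Finset.univ : Finset (Fin n)).erase i).powersetCard (n-1)
        = {(Finset.univ : Finset (Fin n)).erase i} := by
      have := Finset.powersetCard_self ((Finset.univ : Finset (Fin n)).erase i)
      rwa [card_erase_univ] at this
    rw [h1, Finset.sum_singleton]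
  have hgn : (∑ s ∈ ((Finset.univ : Finset (Fin n)).erase i).powersetCard n,
      ∏ j ∈ s, lam j) = 0 := by
    rw [Finset.powersetCard_eq_empty.2 (by rw [card_erase_univ]; omega), Finset.sum_empty]
  have hfun : (fun t : ℝ => Fquot n (Function.update lam i t))
      = fun t : ℝ => (t * P) / (t * Cc + Dd) := by
    funext t
    unfold Fquot
    rw [esig_update n n (by omega), esig_update n (n-2) (by omega)]
    rw [show n - 1 = n - 1 from rfl] at *
    rw [hgn1, hgn, show n - 2 - 1 = n - 3 by omega, ← hCc, ← hDd, add_zero]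
  have hden : lam i * Cc + Dd = esig n (n-2) lam := by
    have := esig_update n (n-2) (by omega) lam i (lam i)
    rw [Function.update_eq_self, show n - 2 - 1 = n - 3 by omega] at this
    rw [this]
  have hσpos : 0 < esig n (n-2) lam := esig_pos n (n-2) (by omega) lam hpos
  have hden0 : lam i * Cc + Dd ≠ 0 := by rw [hden]; exact ne_of_gt hσpos
  have h1 : HasDerivAt (fun t : ℝ => t * P) P (lam i) := by
    simpa using (hasDerivAt_id (lam i)).mul_const P
  have h2 : HasDerivAt (fun t : ℝ => t * Cc + Dd) Cc (lam i) := by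
    simpa using ((hasDerivAt_id (lam i)).mul_const Cc).add_const Dd
  have hd : HasDerivAt (fun t : ℝ => (t * P) / (t * Cc + Dd))
      ((P * (lam i * Cc + Dd) - (lam i * P) * Cc) / (lam i * Cc + Dd)^2) (lam i) :=
    h1.div h2 hden0
  unfold partialF
  rw [hfun, hd.deriv, hden]
  have : P * esig n (n-2) lam - lam i * P * Cc = P * Dd := by
    rw [← hden]; ring
  rw [show P * esig n (n - 2) lam - lam i * P * Cc = P * Dd from by rw [← hden]; ring]

/-- There are `c(n), C(n) > 0` such that for every decreasingly ordered positive
`λ`, `c·F/λ_n ≤ ∑_i ∂F/∂λ_i ≤ C·F/λ_n`. -/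
theorem stmt_16 (n : ℕ) (hn : 3 ≤ n) :
    ∃ c C : ℝ, 0 < c ∧ 0 < C ∧ ∀ lam : Fin n → ℝ,
      (∀ i j : Fin n, i ≤ j → lam j ≤ lam i) → (∀ i, 0 < lam i) →
      c * Fquot n lam / lam ⟨n - 1, by omega⟩ ≤ ∑ i : Fin n, partialF n i lam ∧
      ∑ i : Fin n, partialF n i lam ≤ C * Fquot n lam / lam ⟨n - 1, by omega⟩ := by
  refine ⟨1 / n, n, by positivity, by positivity, fun lam hmono hpos => ?_⟩
  set m : Fin n := ⟨n - 1, by omega⟩ with hm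
  have hlm : ∀ i, lam m ≤ lam i := fun i => hmono i m (by
    rw [Fin.le_def]; exact Nat.le_sub_one_of_lt i.isLt)
  set σn : ℝ := ∏ j, lam j with hσn
  set σ₂ : ℝ := esig n (n-2) lam with hσ₂
  have hσ₂pos : 0 < σ₂ := esig_pos n (n-2) (by omega) lam hpos
  have hσnpos : 0 < σn := Finset.prod_pos fun j _ => hpos j
  set P : Fin n → ℝ := fun i => ∏ j ∈ Finset.univ.erase i, lam j with hPdef
  set D : Fin n → ℝ := fun i =>
    ∑ s ∈ ((Finset.univ : Finset (Fin n)).erase i).powersetCard (n-2), ∏ j ∈ s, lam j with hDdef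
  have hPσ : ∀ i, lam i * P i = σn := fun i => Finset.mul_prod_erase _ _ (Finset.mem_univ i)
  have hPpos : ∀ i, 0 < P i := fun i => Finset.prod_pos fun j _ => hpos j
  have hDpos : ∀ i, 0 < D i := by
    intro i
    apply Finset.sum_pos
    · intro s _; exact Finset.prod_pos fun j _ => hpos j
    · exact Finset.powersetCard_nonempty.2 (by rw [card_erase_univ]; omega)
  have hDle : ∀ i, D i ≤ σ₂ := by
    intro i
    apply Finset.sum_le_sum_of_subset_of_nonneg
      (Finset.powersetCard_mono (Finset.subset_univ _))
    intro s _ _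
    exact le_of_lt (Finset.prod_pos fun j _ => hpos j)
  set T : ℝ := ∑ i, P i * D i with hT
  have hsum : ∑ i : Fin n, partialF n i lam = T / σ₂ ^ 2 := by
    rw [hT, Finset.sum_div]
    exact Finset.sum_congr rfl fun i _ => partialF_eq n hn lam hpos i
  -- upper bound:  lam m * T ≤ n * (σn * σ₂)
  have hupper : lam m * T ≤ n * (σn * σ₂) := by
    have h1 : ∀ i : Fin n, lam m * (P i * D i) ≤ σn * σ₂ := by
      intro i
      have h2 : lam m * P i ≤ σn := by
        rw [← hPσ i]
        exact mul_le_mul_of_nonneg_right (hlm i) (le_of_lt (hPpos i))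
      calc lam m * (P i * D i) = (lam m * P i) * D i := by ring
        _ ≤ σn * D i := mul_le_mul_of_nonneg_right h2 (le_of_lt (hDpos i))
        _ ≤ σn * σ₂ := mul_le_mul_of_nonneg_left (hDle i) (le_of_lt hσnpos)
    calc lam m * T = ∑ i : Fin n, lam m * (P i * D i) := by rw [hT, Finset.mul_sum]
      _ ≤ ∑ _i : Fin n, σn * σ₂ := Finset.sum_le_sum fun i _ => h1 i
      _ = n * (σn * σ₂) := by rw [Finset.sum_const]; simp [mul_comm]
  -- lower bound: σn * σ₂ ≤ n * (lam m * T)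
  have hlower : σn * σ₂ ≤ n * (lam m * T) := by
    set E : ℝ := ∑ s ∈ ((Finset.univ : Finset (Fin n)).erase m).powersetCard (n-3),
      ∏ j ∈ s, lam j with hE
    have hsplit : σ₂ = lam m * E + D m := by
      have := esig_update n (n-2) (by omega) lam m (lam m)
      rw [Function.update_eq_self, show n - 2 - 1 = n - 3 by omega] at this
      exact this
    have hEnonneg : 0 ≤ E := Finset.sum_nonneg fun s _ =>
      le_of_lt (Finset.prod_pos fun j _ => hpos j)
    have hA : (Finset.univ : Finset (Fin n)).erase m =
        (Finset.univ : Finset (Fin n)).erase m := rfl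
    have hkey : 2 * (lam m * E) ≤ ((n : ℝ) - 2) * D m := by
      have hs := swap_sum ((Finset.univ : Finset (Fin n)).erase m) (n-3) lam
      rw [show n - 3 + 1 = n - 2 by omega] at hs
      have hL : 2 * (lam m * E) ≤
          ∑ s ∈ ((Finset.univ : Finset (Fin n)).erase m).powersetCard (n-3),
            ∑ j ∈ (Finset.univ.erase m) \ s, ∏ x ∈ insert j s, lam x := by
        have : 2 * (lam m * E) = ∑ s ∈ ((Finset.univ : Finset (Fin n)).erase m).powersetCard (n-3),
            2 * (lam m * ∏ j ∈ s, lam j) := by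
          rw [hE, Finset.mul_sum, Finset.mul_sum]
        rw [this]
        apply Finset.sum_le_sum
        intro s hs'
        obtain ⟨hsub, hcard⟩ := Finset.mem_powersetCard.1 hs'
        have hcardsd : ((Finset.univ.erase m) \ s).card = 2 := by
          rw [Finset.card_sdiff_of_subset hsub, hcard, card_erase_univ]; omega
        have hstep : ∀ j ∈ (Finset.univ.erase m) \ s,
            lam m * ∏ x ∈ s, lam x ≤ ∏ x ∈ insert j s, lam x := by
          intro j hj
          have hjns : j ∉ s := (Finset.mem_sdiff.1 hj).2
          rw [Finset.prod_insert hjns]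
          exact mul_le_mul_of_nonneg_right (hlm j)
            (le_of_lt (Finset.prod_pos fun x _ => hpos x))
        calc 2 * (lam m * ∏ j ∈ s, lam j)
            = ∑ _j ∈ (Finset.univ.erase m) \ s, lam m * ∏ x ∈ s, lam x := by
              rw [Finset.sum_const, hcardsd]; push_cast; ring
          _ ≤ ∑ j ∈ (Finset.univ.erase m) \ s, ∏ x ∈ insert j s, lam x :=
              Finset.sum_le_sum hstep
      have hR : (∑ t ∈ ((Finset.univ : Finset (Fin n)).erase m).powersetCard (n-2),
          ∑ j ∈ t, ∏ x ∈ t, lam x) = ((n:ℝ) - 2) * D m := by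
        rw [hDdef, Finset.mul_sum]
        apply Finset.sum_congr rfl
        intro t ht
        obtain ⟨hsub, hcard⟩ := Finset.mem_powersetCard.1 ht
        rw [Finset.sum_const, hcard]
        have : ((n - 2 : ℕ) : ℝ) = (n : ℝ) - 2 := by
          have : (3:ℕ) ≤ n := hn
          push_cast [Nat.cast_sub (by omega : 2 ≤ n)]
          ring
        rw [nsmul_eq_mul, this]
      rw [← hR]
      exact le_trans hL (le_of_eq hs)
    have hTm : σn * D m ≤ lam m * T := by
      have h3 : lam m * (P m * D m) ≤ lam m * T := by
        have h4 : P m * D m ≤ T :=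
          Finset.single_le_sum (f := fun i => P i * D i)
            (fun i _ => le_of_lt (mul_pos (hPpos i) (hDpos i))) (Finset.mem_univ m)
        exact mul_le_mul_of_nonneg_left h4 (le_of_lt (hpos m))
      calc σn * D m = lam m * (P m * D m) := by rw [← hPσ m]; ring
        _ ≤ lam m * T := h3
    have hσ₂le : σ₂ ≤ (n : ℝ) * D m := by
      rw [hsplit]
      nlinarith [hkey, hDpos m, show (3:ℝ) ≤ (n:ℝ) from by exact_mod_cast hn,
        mul_pos (hpos m) (lt_of_lt_of_le (by norm_num) (le_of_eq rfl) : (0:ℝ) < 1)]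
    calc σn * σ₂ ≤ σn * ((n:ℝ) * D m) := mul_le_mul_of_nonneg_left hσ₂le (le_of_lt hσnpos)
      _ = (n:ℝ) * (σn * D m) := by ring
      _ ≤ n * (lam m * T) := mul_le_mul_of_nonneg_left hTm (by positivity)
  -- conclude
  have hFq : Fquot n lam = σn / σ₂ := by
    unfold Fquot; rw [esig_top]
  have hlmpos : 0 < lam m := hpos m
  have hnpos : (0:ℝ) < n := by positivity
  constructor
  · rw [hsum, hFq, div_le_div_iff₀ hlmpos (by positivity)]
    have heq : 1 / (n:ℝ) * (σn / σ₂) * σ₂ ^ 2 = σn * σ₂ / n := by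
      field_simp
    rw [heq, div_le_iff₀ hnpos]
    calc σn * σ₂ ≤ (n:ℝ) * (lam m * T) := hlower
      _ = T * lam m * n := by ring
  · rw [hsum, hFq, div_le_div_iff₀ (by positivity) hlmpos]
    have heq : (n:ℝ) * (σn / σ₂) * σ₂ ^ 2 = (n:ℝ) * (σn * σ₂) := by
      field_simp
    rw [heq]
    calc T * lam m = lam m * T := by ring
      _ ≤ (n:ℝ) * (σn * σ₂) := hupper
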